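/- arXiv:1208.1131 — 2 statements merged into one kernel-verified Lean document; each statement's English description precedes it below -/
import Mathlib

section
/- For any even n ≥ 0, the sum over monic polynomials l of degree n/2 of the product over monic irreducible P | l of (1 + 1/|P|)^{-1} equals q^{n/2} times the sum over monic polynomials d of degree at most n/2 of (mu(d)/|d|) · prod_{P | d} 1/(|P|+1). -/
open Polynomial UniqueFactorizationMonoid
open scoped Classical

/-- The polynomial Möbius function. -/
noncomputable def polyMu {F : Type*} [Field F] (f : F[X]) : ℤ :=
  if Squarefree f then (-1) ^ Multiset.card (normalizedFactors f) else 0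

/-!
Write `m = n / 2`. Since `(1 + 1/|P|)⁻¹ = 1 - 1/(|P| + 1)`, expanding the product over
the monic irreducible divisors `P` of `l` gives `∑_{d ∣ l} μ(d) ∏_{P ∣ d} 1/(|P| + 1)`,
the monic squarefree divisors `d` of `l` being exactly the products of sets of such `P`.
Exchanging the sums over `l` and `d`, a monic `d` of degree at most `m` divides exactly
`q^(m - deg d)` monic `l` of degree `m`, namely the `d * t` with `t` monic of degree
`m - deg d`.
-/

theorem inv_one_add_one_div {K : Type*} [Field K] {a : K} (ha : a ≠ 0) (ha1 : a + 1 ≠ 0) :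
    (1 + 1 / a)⁻¹ = 1 - 1 / (a + 1) := by
  field_simp
  ring

theorem Finset.sum_sum_filter_eq_sum_card_filter_mul {α β S : Type*} [Semiring S]
    (M : Finset α) (D : Finset β) (r : β → α → Prop) (g : β → S) :
    ∑ l ∈ M, ∑ d ∈ D with r d l, g d =
      ∑ d ∈ D, ((M.filter (r d ·)).card : S) * g d := by
  simp only [Finset.sum_filter]
  rw [Finset.sum_comm]
  refine Finset.sum_congr rfl fun d _ => ?_
  rw [← Finset.sum_filter, Finset.sum_const, nsmul_eq_mul]

namespace Polynomial

section Counting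

variable {R : Type*} [Ring R] [Nontrivial R] [Fintype R]

variable (R) in
noncomputable def monicEquivFun (k : ℕ) :
    (Fin k → R) ≃ {p : R[X] // p.Monic ∧ p.natDegree = k} :=
  ((monicEquivDegreeLT k).trans (degreeLTEquiv R k).toEquiv).symm

variable (R) in
noncomputable def monicOfDegree (k : ℕ) : Finset R[X] :=
  Finset.univ.map <| (monicEquivFun R k).toEmbedding.trans (Function.Embedding.subtype _)

variable (R) in
noncomputable def monicOfDegreeLE (m : ℕ) : Finset R[X] :=
  (Finset.range (m + 1)).biUnion (monicOfDegree R)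

@[simp]
theorem mem_monicOfDegree {k : ℕ} {p : R[X]} :
    p ∈ monicOfDegree R k ↔ p.Monic ∧ p.natDegree = k := by
  simp only [monicOfDegree, Finset.mem_map, Finset.mem_univ, true_and]
  exact ⟨fun ⟨c, hc⟩ => hc ▸ (monicEquivFun R k c).2,
    fun hp => ⟨(monicEquivFun R k).symm ⟨p, hp⟩, by simp⟩⟩

@[simp]
theorem mem_monicOfDegreeLE {m : ℕ} {p : R[X]} :
    p ∈ monicOfDegreeLE R m ↔ p.Monic ∧ p.natDegree ≤ m := by
  simp [monicOfDegreeLE, and_comm]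

theorem card_monicOfDegree (k : ℕ) : (monicOfDegree R k).card = Fintype.card R ^ k := by
  simp [monicOfDegree]

theorem card_monicOfDegree_filter_dvd {d : R[X]} (hd : d.Monic) {m : ℕ}
    (hdm : d.natDegree ≤ m) :
    ((monicOfDegree R m).filter (d ∣ ·)).card = Fintype.card R ^ (m - d.natDegree) := by
  have hmultiples : (monicOfDegree R m).filter (d ∣ ·) =
      (monicOfDegree R (m - d.natDegree)).map ⟨(d * ·), hd.isRegular.left⟩ := by
    ext l
    simp only [Finset.mem_filter, mem_monicOfDegree, Finset.mem_map, Function.Embedding.coeFn_mk]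
    constructor
    · rintro ⟨⟨hl, rfl⟩, t, rfl⟩
      have ht := hd.of_mul_monic_left hl
      exact ⟨t, ⟨ht, by rw [hd.natDegree_mul ht]; omega⟩, rfl⟩
    · rintro ⟨t, ⟨ht, htm⟩, rfl⟩
      exact ⟨⟨hd.mul ht, by rw [hd.natDegree_mul ht]; omega⟩, dvd_mul_right d t⟩
  rw [hmultiples, Finset.card_map, card_monicOfDegree]

end Counting

section Mobius

variable {F : Type*} [Field F]

noncomputable def monicFactors (f : F[X]) : Finset F[X] := (normalizedFactors f).toFinset

theorem mem_monicFactors {f P : F[X]} (hf : f ≠ 0) :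
    P ∈ monicFactors f ↔ P.Monic ∧ Irreducible P ∧ P ∣ f := by
  rw [monicFactors, Multiset.mem_toFinset, Polynomial.mem_normalizedFactors_iff hf, and_left_comm]

theorem coe_monicFactors {f : F[X]} (hf : f ≠ 0) :
    (monicFactors f : Set F[X]) = {P | P.Monic ∧ Irreducible P ∧ P ∣ f} :=
  Set.ext fun _ => mem_monicFactors hf

theorem normalizedFactors_finset_prod {t : Finset F[X]}
    (ht : ∀ P ∈ t, P.Monic ∧ Irreducible P) : normalizedFactors (∏ P ∈ t, P) = t.val := by
  rw [Finset.prod_eq_multiset_prod, Multiset.map_id',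
    normalizedFactors_prod_eq _ fun P hP => (ht P hP).2]
  exact (Multiset.map_congr rfl fun P hP => (ht P hP).1.normalize_eq_self).trans t.val.map_id

theorem monicFactors_finset_prod {t : Finset F[X]} (ht : ∀ P ∈ t, P.Monic ∧ Irreducible P) :
    monicFactors (∏ P ∈ t, P) = t := by
  rw [monicFactors, normalizedFactors_finset_prod ht, Finset.val_toFinset]

theorem squarefree_finset_prod {t : Finset F[X]} (ht : ∀ P ∈ t, P.Monic ∧ Irreducible P) :
    Squarefree (∏ P ∈ t, P) := by
  rw [squarefree_iff_nodup_normalizedFactors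
    (monic_prod_of_monic _ _ fun P hP => (ht P hP).1).ne_zero, normalizedFactors_finset_prod ht]
  exact t.nodup

theorem polyMu_finset_prod {t : Finset F[X]} (ht : ∀ P ∈ t, P.Monic ∧ Irreducible P) :
    polyMu (∏ P ∈ t, P) = (-1) ^ t.card := by
  rw [polyMu, if_pos (squarefree_finset_prod ht), normalizedFactors_finset_prod ht]
  rfl

theorem polyMu_eq_zero_of_not_squarefree {d : F[X]} (hd : ¬Squarefree d) : polyMu d = 0 :=
  if_neg hd

theorem prod_monicFactors_of_squarefree {d : F[X]} (hd : d.Monic) (hsq : Squarefree d) :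
    ∏ P ∈ monicFactors d, P = d := by
  have hnodup := (squarefree_iff_nodup_normalizedFactors hd.ne_zero).1 hsq
  rw [Finset.prod_eq_multiset_prod, Multiset.map_id', monicFactors, Multiset.toFinset_val,
    hnodup.dedup, prod_normalizedFactors_eq hd.ne_zero, hd.normalize_eq_self]

theorem prod_monicFactors_one_sub_eq_sum_polyMu {S : Type*} [CommRing S] (w : F[X] → S)
    {l : F[X]} (hl : l ≠ 0) {D : Finset F[X]} (hDmonic : ∀ d ∈ D, d.Monic)
    (hD : ∀ d, d.Monic → d ∣ l → d ∈ D) :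
    ∏ P ∈ monicFactors l, (1 - w P) =
      ∑ d ∈ D with d ∣ l, (polyMu d : S) * ∏ P ∈ monicFactors d, w P := by
  rw [← Finset.sum_filter_of_ne (p := Squarefree) fun d _ hne => by
    by_contra hsq; simp [polyMu_eq_zero_of_not_squarefree hsq] at hne, Finset.prod_sub]
  have hsub {t} (ht : t ∈ (monicFactors l).powerset) : ∀ P ∈ t, P.Monic ∧ Irreducible P :=
    fun P hP => ((mem_monicFactors hl).1 (Finset.mem_powerset.1 ht hP)).imp_right And.left
  refine Finset.sum_bij' (fun t _ => ∏ P ∈ t, P) (fun d _ => monicFactors d) ?_ ?_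
    (fun t ht => monicFactors_finset_prod (hsub ht)) ?_ ?_
  · intro t ht
    have hmonic := monic_prod_of_monic _ _ fun P hP => (hsub ht P hP).1
    have hdvd : ∏ P ∈ t, P ∣ l := by
      rw [dvd_iff_normalizedFactors_le_normalizedFactors hmonic.ne_zero hl,
        normalizedFactors_finset_prod (hsub ht), Multiset.le_iff_subset t.nodup]
      exact fun P hP => Multiset.mem_toFinset.1 (Finset.mem_powerset.1 ht hP)
    simp only [Finset.mem_filter]
    exact ⟨⟨hD _ hmonic hdvd, hdvd⟩, squarefree_finset_prod (hsub ht)⟩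
  · intro d hd
    simp only [Finset.mem_filter] at hd
    refine Finset.mem_powerset.2 fun P hP => ?_
    obtain ⟨hPm, hPi, hPd⟩ := (mem_monicFactors (hDmonic d hd.1.1).ne_zero).1 hP
    exact (mem_monicFactors hl).2 ⟨hPm, hPi, hPd.trans hd.1.2⟩
  · intro d hd
    simp only [Finset.mem_filter] at hd
    exact prod_monicFactors_of_squarefree (hDmonic d hd.1.1) hd.2
  · intro t ht
    simp [polyMu_finset_prod (hsub ht), monicFactors_finset_prod (hsub ht)]

end Mobius

end Polynomial

theorem sum_over_monic_eq_general {F : Type*} [Field F] [Fintype F] (q : ℕ)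
    (hq : Fintype.card F = q) (n : ℕ) :
    ∑ᶠ l ∈ {l : F[X] | l.Monic ∧ l.natDegree = n / 2},
        ∏ᶠ P ∈ {P : F[X] | P.Monic ∧ Irreducible P ∧ P ∣ l},
          (1 + 1 / (q : ℝ) ^ P.natDegree)⁻¹ =
      (q : ℝ) ^ (n / 2) *
        ∑ᶠ d ∈ {d : F[X] | d.Monic ∧ d.natDegree ≤ n / 2},
          (polyMu d : ℝ) / (q : ℝ) ^ d.natDegree *
            ∏ᶠ P ∈ {P : F[X] | P.Monic ∧ Irreducible P ∧ P ∣ d},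
              (1 / ((q : ℝ) ^ P.natDegree + 1)) := by
  set m := n / 2
  have hq0 : (0 : ℝ) < q := by rw [← hq]; exact_mod_cast Fintype.card_pos
  set W : F[X] → ℝ := fun d => ∏ P ∈ monicFactors d, 1 / ((q : ℝ) ^ P.natDegree + 1)
  have hM : {l : F[X] | l.Monic ∧ l.natDegree = m} = monicOfDegree F m := by ext; simp
  have hD : {d : F[X] | d.Monic ∧ d.natDegree ≤ m} = monicOfDegreeLE F m := by ext; simp
  have hexpand (l) (hl : l ∈ monicOfDegree F m) :
      ∏ᶠ P ∈ {P : F[X] | P.Monic ∧ Irreducible P ∧ P ∣ l},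
          (1 + 1 / (q : ℝ) ^ P.natDegree)⁻¹ =
        ∑ d ∈ monicOfDegreeLE F m with d ∣ l, (polyMu d : ℝ) * W d := by
    obtain ⟨hl, hlm⟩ := mem_monicOfDegree.1 hl
    rw [← coe_monicFactors hl.ne_zero, finprod_mem_coe_finset,
      ← prod_monicFactors_one_sub_eq_sum_polyMu _ hl.ne_zero
        (fun d hd => (mem_monicOfDegreeLE.1 hd).1)
        fun d hd hdl => mem_monicOfDegreeLE.2 ⟨hd, hlm ▸ natDegree_le_of_dvd hdl hl.ne_zero⟩]
    exact Finset.prod_congr rfl fun P _ => inv_one_add_one_div (by positivity) (by positivity)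
  have hcount (d) (hd : d ∈ monicOfDegreeLE F m) :
      ((monicOfDegree F m).filter (d ∣ ·)).card * ((polyMu d : ℝ) * W d) =
        (q : ℝ) ^ m * ((polyMu d : ℝ) / (q : ℝ) ^ d.natDegree *
          ∏ᶠ P ∈ {P : F[X] | P.Monic ∧ Irreducible P ∧ P ∣ d},
            1 / ((q : ℝ) ^ P.natDegree + 1)) := by
    obtain ⟨hd, hdm⟩ := mem_monicOfDegreeLE.1 hd
    rw [card_monicOfDegree_filter_dvd hd hdm, hq, ← coe_monicFactors hd.ne_zero,
      finprod_mem_coe_finset, Nat.cast_pow, pow_sub₀ _ hq0.ne' hdm]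
    simp only [W]
    field_simp
  rw [hM, hD, finsum_mem_coe_finset, finsum_mem_coe_finset, Finset.sum_congr rfl hexpand,
    Finset.sum_sum_filter_eq_sum_card_filter_mul, Finset.sum_congr rfl hcount, Finset.mul_sum]

/-- For even `n`,
`∑_{l monic, deg l = n/2} ∏_{P ∣ l}(1 + 1/|P|)⁻¹
  = q^{n/2} ∑_{d monic, deg d ≤ n/2} (μ(d)/|d|) ∏_{P ∣ d} 1/(|P|+1)`. -/
theorem sum_over_monic_eq {F : Type*} [Field F] [Fintype F] (q : ℕ)
    (hq : Fintype.card F = q) (n : ℕ) (hn : Even n) :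
    ∑ᶠ l ∈ {l : F[X] | l.Monic ∧ l.natDegree = n / 2},
        ∏ᶠ P ∈ {P : F[X] | P.Monic ∧ Irreducible P ∧ P ∣ l},
          (1 + 1 / (q : ℝ) ^ P.natDegree)⁻¹ =
      (q : ℝ) ^ (n / 2) *
        ∑ᶠ d ∈ {d : F[X] | d.Monic ∧ d.natDegree ≤ n / 2},
          (polyMu d : ℝ) / (q : ℝ) ^ d.natDegree *
            ∏ᶠ P ∈ {P : F[X] | P.Monic ∧ Irreducible P ∧ P ∣ d},
              (1 / ((q : ℝ) ^ P.natDegree + 1)) :=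
  sum_over_monic_eq_general q hq n
end

section
/- The tail sum over monic polynomials d of degree > m of (mu(d)/|d|) · prod_{P | d} 1/(|P|+1) is bounded in absolute value by a constant times q^{-m} (indeed by q^{-m}·q/(q-1)). -/
open Polynomial UniqueFactorizationMonoid
open scoped Classical

/-! For squarefree `d` the product over `P ∣ d` is at most `∏ 1/|P| = 1/|d|`, so each term of
the tail is bounded by `1/|d|²`. There are `q^n` monic polynomials of degree `n`, hence the
degree-`n` terms contribute at most `q^{-n}`, and summing the geometric series over `n > m`
gives `q^{-m}/(q-1)`. -/

section Counting

variable {R : Type*} [Semiring R]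

theorem Polynomial.natCard_monic_natDegree_eq [Nontrivial R] (n : ℕ) :
    Nat.card {p : R[X] // p.Monic ∧ p.natDegree = n} = Nat.card R ^ n := by
  rw [Nat.card_congr ((monicEquivDegreeLT n).trans (degreeLTEquiv R n).toEquiv), Nat.card_fun,
    Nat.card_fin]

instance Polynomial.finite_monic_natDegree [Nontrivial R] [Finite R] (n : ℕ) :
    Finite {p : R[X] // p.Monic ∧ p.natDegree = n} :=
  .of_equiv _ ((monicEquivDegreeLT n).trans (degreeLTEquiv R n).toEquiv).symm

def Polynomial.sigmaMonicNatDegreeEquiv (m : ℕ) :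
    (Σ n : ℕ, {p : R[X] // p.Monic ∧ p.natDegree = m + 1 + n}) ≃
      {p : R[X] // p.Monic ∧ m < p.natDegree} where
  toFun p := ⟨p.2.1, p.2.2.1, by have := p.2.2.2; omega⟩
  invFun p := ⟨p.1.natDegree - (m + 1), p.1, p.2.1, by have := p.2.2; omega⟩
  left_inv := by
    rintro ⟨n, p, hmon, hdeg⟩
    obtain rfl : n = p.natDegree - (m + 1) := by omega
    rfl
  right_inv _ := rfl

theorem Polynomial.hasSum_monic_natDegree_gt [Nontrivial R] [Finite R] (m : ℕ) {g : ℕ → ℝ}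
    (hg : ∀ n, 0 ≤ g n) {a : ℝ}
    (ha : HasSum (fun n => (Nat.card R : ℝ) ^ (m + 1 + n) * g (m + 1 + n)) a) :
    HasSum (fun p : {p : R[X] // p.Monic ∧ m < p.natDegree} => g p.1.natDegree) a := by
  rw [← (sigmaMonicNatDegreeEquiv m).hasSum_iff]
  have hfiber (n : ℕ) : HasSum (fun p : {p : R[X] // p.Monic ∧ p.natDegree = m + 1 + n} =>
      g p.1.natDegree) ((Nat.card R : ℝ) ^ (m + 1 + n) * g (m + 1 + n)) := by
    have hsum : Summable fun p : {p : R[X] // p.Monic ∧ p.natDegree = m + 1 + n} =>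
      g p.1.natDegree := .of_finite
    have := hsum.hasSum
    rwa [tsum_congr fun p => congrArg g p.2.2, tsum_const, natCard_monic_natDegree_eq,
      nsmul_eq_mul, Nat.cast_pow] at this
  exact ha.sigma_of_hasSum hfiber <| (summable_sigma_of_nonneg fun _ => hg _).2
    ⟨fun n => (hfiber n).summable, ha.summable.congr fun n => (hfiber n).tsum_eq.symm⟩

end Counting

section Factors

variable {F : Type*} [Field F]

theorem Polynomial.setOf_monic_irreducible_dvd_eq {d : F[X]} (hd : d ≠ 0) :
    {P : F[X] | P.Monic ∧ Irreducible P ∧ P ∣ d} = ↑(normalizedFactors d).toFinset := by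
  ext P
  simp only [Set.mem_ofPred_eq, Finset.mem_coe, Multiset.mem_toFinset,
    Polynomial.mem_normalizedFactors_iff hd]
  tauto

theorem Polynomial.sum_natDegree_toFinset_normalizedFactors {d : F[X]} (hd : Squarefree d) :
    ∑ P ∈ (normalizedFactors d).toFinset, P.natDegree = d.natDegree := by
  have hnodup := (squarefree_iff_nodup_normalizedFactors hd.ne_zero).mp hd
  rw [← Multiset.toFinset_eq hnodup, Finset.sum_mk,
    ← natDegree_multiset_prod _ (zero_notMem_normalizedFactors _)]
  exact natDegree_eq_of_degree_eq (degree_eq_degree_of_associated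
    (prod_normalizedFactors hd.ne_zero))

theorem Polynomial.prod_one_div_pow_natDegree_add_one_le {d : F[X]} (hd : Squarefree d)
    {x : ℝ} (hx : 0 < x) :
    ∏ P ∈ (normalizedFactors d).toFinset, 1 / (x ^ P.natDegree + 1) ≤ 1 / x ^ d.natDegree :=
  calc ∏ P ∈ (normalizedFactors d).toFinset, 1 / (x ^ P.natDegree + 1)
      ≤ ∏ P ∈ (normalizedFactors d).toFinset, 1 / x ^ P.natDegree :=
        Finset.prod_le_prod (fun _ _ => by positivity) fun _ _ =>
          one_div_le_one_div_of_le (by positivity) (le_add_of_nonneg_right zero_le_one)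
    _ = 1 / x ^ d.natDegree := by
        rw [Finset.prod_div_distrib, Finset.prod_const_one, Finset.prod_pow_eq_pow_sum,
          sum_natDegree_toFinset_normalizedFactors hd]

theorem abs_polyMu_div_mul_finprod_le (d : F[X]) {x : ℝ} (hx : 0 < x) :
    |(polyMu d : ℝ) / x ^ d.natDegree *
        ∏ᶠ P ∈ {P : F[X] | P.Monic ∧ Irreducible P ∧ P ∣ d}, 1 / (x ^ P.natDegree + 1)| ≤
      (1 / x ^ d.natDegree) ^ 2 := by
  by_cases hsq : Squarefree d
  · have hprod := prod_one_div_pow_natDegree_add_one_le hsq hx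
    have hmu : |(polyMu d : ℝ)| = 1 := by simp [polyMu, hsq, abs_pow]
    rw [setOf_monic_irreducible_dvd_eq hsq.ne_zero, finprod_mem_coe_finset, abs_mul, abs_div, hmu,
      abs_of_pos (by positivity), abs_of_nonneg (Finset.prod_nonneg fun _ _ => by positivity), sq]
    gcongr
  · simp only [polyMu, hsq, if_false, Int.cast_zero, zero_div, zero_mul, abs_zero]
    positivity

end Factors

/-- The tail sum over monic `d` of degree `> m` of `(μ(d)/|d|) ∏_{P ∣ d} 1/(|P|+1)`
is bounded by `q^{-m} · q/(q-1)`. -/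
theorem tail_sum_bound {F : Type*} [Field F] [Fintype F] (q : ℕ)
    (hq : Fintype.card F = q) (m : ℕ) :
    |∑' d : {d : F[X] // d.Monic ∧ m < d.natDegree},
        ((polyMu d.1 : ℝ) / (q : ℝ) ^ d.1.natDegree *
          ∏ᶠ P ∈ {P : F[X] | P.Monic ∧ Irreducible P ∧ P ∣ d.1},
            (1 / ((q : ℝ) ^ P.natDegree + 1)))| ≤
      (1 / (q : ℝ) ^ m) * ((q : ℝ) / ((q : ℝ) - 1)) := by
  have hq1 : (1 : ℝ) < q := by exact_mod_cast hq ▸ Fintype.one_lt_card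
  have hq0 : (0 : ℝ) < q := by linarith
  have hgeom : HasSum (fun n => (Nat.card F : ℝ) ^ (m + 1 + n) * (1 / (q : ℝ) ^ (m + 1 + n)) ^ 2)
      ((1 / (q : ℝ)) ^ (m + 1) * (1 - 1 / (q : ℝ))⁻¹) := by
    refine ((hasSum_geometric_of_lt_one (by positivity) ((div_lt_one hq0).2 hq1)).mul_left
      ((1 / (q : ℝ)) ^ (m + 1))).congr_fun fun n => ?_
    rw [Nat.card_eq_fintype_card, hq, ← pow_add, sq, ← mul_assoc,
      mul_one_div_cancel (pow_ne_zero _ hq0.ne'), one_mul, one_div_pow]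
  calc _ ≤ (1 / (q : ℝ)) ^ (m + 1) * (1 - 1 / (q : ℝ))⁻¹ :=
        (Real.norm_eq_abs _).symm.trans_le <| tsum_of_norm_bounded
          (hasSum_monic_natDegree_gt m (g := fun n => (1 / (q : ℝ) ^ n) ^ 2)
            (fun _ => by positivity) hgeom) fun d => abs_polyMu_div_mul_finprod_le d.1 hq0
    _ = 1 / (q : ℝ) ^ m * (1 / ((q : ℝ) - 1)) := by
        rw [one_sub_div hq0.ne', inv_div, pow_succ, one_div_pow]
        field_simp
    _ ≤ 1 / (q : ℝ) ^ m * ((q : ℝ) / ((q : ℝ) - 1)) := by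
        gcongr
end
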